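/- arXiv:0811.4669 — 6 statements merged into one kernel-verified Lean document; each statement's English description precedes it below -/
import Mathlib

section
/- In the Lie algebra so(n,1) ⊗ Q, the elements Q_i = (E_{i,n+1} + E_{n+1,i}) ⊗ λ̄i (i = 1,...,n) satisfy the relations [Q_i,[Q_i,Q_k]] − [Q_j,[Q_j,Q_k]] = (rj − ri)·Q_k whenever i ≠ k and j ≠ k. -/
open MvPolynomial Matrix

noncomputable section

/-- The ideal generated by the polynomials `λᵢ² − λⱼ² + rᵢ − rⱼ`. -/
def LLIdeal (n : ℕ) (r : Fin n → ℂ) : Ideal (MvPolynomial (Fin n) ℂ) :=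
  Ideal.span {p | ∃ i j : Fin n, p = X i ^ 2 - X j ^ 2 + C (r i) - C (r j)}

/-- The algebra `Q` of polynomial functions on the curve. -/
abbrev LLQ (n : ℕ) (r : Fin n → ℂ) : Type := MvPolynomial (Fin n) ℂ ⧸ LLIdeal n r

/-- `λ̄ᵢ`, the image of `λᵢ` in `Q`. -/
def lamQ (n : ℕ) (r : Fin n → ℂ) (i : Fin n) : LLQ n r :=
  Ideal.Quotient.mk _ (X i)

/-- `λ̄ = λ̄ᵢ² + rᵢ` (independent of `i`). -/
def lambar (n : ℕ) (r : Fin n → ℂ) [NeZero n] : LLQ n r :=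
  lamQ n r 0 ^ 2 + algebraMap ℂ _ (r 0)

/-- Matrices of size `n+1` over `Q`; contains `so(n,1) ⊗ Q` with its commutator
Lie bracket. -/
abbrev LLM (n : ℕ) (r : Fin n → ℂ) : Type := Matrix (Fin (n+1)) (Fin (n+1)) (LLQ n r)

/-- `Q_i = (E_{i,n+1} + E_{n+1,i}) ⊗ λ̄ᵢ`. -/
def Qgen (n : ℕ) (r : Fin n → ℂ) (i : Fin n) : LLM n r :=
  lamQ n r i • (Matrix.single i.castSucc (Fin.last n) 1 + Matrix.single (Fin.last n) i.castSucc 1)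

/-- `Q^{2k-1}_l = (E_{l,n+1} + E_{n+1,l}) ⊗ λ̄^{k-1} λ̄_l`. -/
def Qodd (n : ℕ) (r : Fin n → ℂ) [NeZero n] (k : ℕ) (l : Fin n) : LLM n r :=
  (lambar n r ^ (k-1) * lamQ n r l) •
    (Matrix.single l.castSucc (Fin.last n) 1 + Matrix.single (Fin.last n) l.castSucc 1)

/-- `Q^{2k}_{ij} = (E_{i,j} − E_{j,i}) ⊗ λ̄^{k-1} λ̄ᵢ λ̄ⱼ`. -/
def Qeven (n : ℕ) (r : Fin n → ℂ) [NeZero n] (k : ℕ) (i j : Fin n) : LLM n r :=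
  (lambar n r ^ (k-1) * lamQ n r i * lamQ n r j) •
    (Matrix.single i.castSucc j.castSucc 1 - Matrix.single j.castSucc i.castSucc 1)

end

/-! With `B_l = E_{l,n+1} + E_{n+1,l}`, a direct matrix computation gives `[B_l, [B_l, B_k]] = B_k`
for `l ≠ k`, hence `[Q_l, [Q_l, Q_k]] = λ̄_l² Q_k`; and `λ̄_i² − λ̄_j² = r_j − r_i` in `Q`. -/

lemma lie_smul_lie_smul {R A : Type*} [CommRing R] [Ring A] [Algebra R A]
    (c d : R) (x z : A) :
    ⁅c • x, ⁅c • x, d • z⁆⁆ = (c * c * d) • ⁅x, ⁅x, z⁆⁆ := by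
  simp only [Ring.lie_def, mul_sub, sub_mul, smul_mul_smul_comm, smul_sub, mul_assoc]
  module

section Boost

variable {R ι : Type*} [CommRing R] [Fintype ι] [DecidableEq ι]

-- `single a L 1 + single L a 1` is the boost generator of `so(n,1)` in the `(a, L)`-plane.
lemma lie_boost_lie_boost {a b L : ι} (hab : a ≠ b) (haL : a ≠ L) (hbL : b ≠ L) :
    ⁅single a L (1 : R) + single L a 1, ⁅single a L (1 : R) + single L a 1,
        single b L (1 : R) + single L b 1⁆⁆
      = single b L (1 : R) + single L b 1 := by
  simp only [Ring.lie_def, mul_sub, sub_mul, add_mul, mul_add, single_mul_single_same,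
    single_mul_single_of_ne, one_mul, hab, haL, hbL, hab.symm, haL.symm, hbL.symm,
    Ne, not_false_iff, mul_zero, zero_mul]
  abel

lemma lie_smul_boost_lie_smul_boost_sub {a b k L : ι} (hak : a ≠ k) (hbk : b ≠ k)
    (haL : a ≠ L) (hbL : b ≠ L) (hkL : k ≠ L) (ca cb ck : R) :
    ⁅ca • (single a L (1 : R) + single L a 1),
        ⁅ca • (single a L (1 : R) + single L a 1), ck • (single k L (1 : R) + single L k 1)⁆⁆
      - ⁅cb • (single b L (1 : R) + single L b 1),
        ⁅cb • (single b L (1 : R) + single L b 1), ck • (single k L (1 : R) + single L k 1)⁆⁆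
      = (ca ^ 2 - cb ^ 2) • ck • (single k L (1 : R) + single L k 1) := by
  rw [lie_smul_lie_smul, lie_smul_lie_smul, lie_boost_lie_boost hak haL hkL,
    lie_boost_lie_boost hbk hbL hkL, ← sub_smul, smul_smul, sq, sq, sub_mul]

end Boost

lemma lamQ_sq_sub_lamQ_sq (n : ℕ) (r : Fin n → ℂ) (i j : Fin n) :
    lamQ n r i ^ 2 - lamQ n r j ^ 2 = algebraMap ℂ (LLQ n r) (r j - r i) := by
  have hrel : Ideal.Quotient.mk (LLIdeal n r) (X i ^ 2 - X j ^ 2 + C (r i) - C (r j)) = 0 :=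
    Ideal.Quotient.eq_zero_iff_mem.mpr (Ideal.subset_span ⟨i, j, rfl⟩)
  simp only [map_add, map_sub, map_pow] at hrel
  change Ideal.Quotient.mk _ (X i) ^ 2 - Ideal.Quotient.mk _ (X j) ^ 2
    = Ideal.Quotient.mk _ (C (r j - r i))
  rw [map_sub, map_sub]
  linear_combination hrel

theorem stmt_2_general (n : ℕ) (r : Fin n → ℂ) :
    ∀ i j k : Fin n, i ≠ k → j ≠ k →
      ⁅Qgen n r i, ⁅Qgen n r i, Qgen n r k⁆⁆ - ⁅Qgen n r j, ⁅Qgen n r j, Qgen n r k⁆⁆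
        = (r j - r i) • Qgen n r k := by
  intro i j k hik hjk
  have hlast (l : Fin n) : l.castSucc ≠ Fin.last n := (Fin.castSucc_lt_last l).ne
  calc _ = (lamQ n r i ^ 2 - lamQ n r j ^ 2) • Qgen n r k :=
        lie_smul_boost_lie_smul_boost_sub (Fin.castSucc_injective n |>.ne hik)
          (Fin.castSucc_injective n |>.ne hjk) (hlast i) (hlast j) (hlast k) _ _ _
    _ = (r j - r i) • Qgen n r k := by rw [lamQ_sq_sub_lamQ_sq, algebraMap_smul]

theorem stmt_2 (n : ℕ) [NeZero n] (hn : 3 ≤ n) (r : Fin n → ℂ) (hr : Function.Injective r) :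
    ∀ i j k : Fin n, i ≠ k → j ≠ k →
      ⁅Qgen n r i, ⁅Qgen n r i, Qgen n r k⁆⁆ - ⁅Qgen n r j, ⁅Qgen n r j, Qgen n r k⁆⁆
        = (r j - r i) • Qgen n r k :=
  stmt_2_general n r
end

section
/- For i ≠ j, a ≠ b, and k1, k2 ≥ 1, the elements Q^{2k}_{ij} = (E_{i,j} − E_{j,i}) ⊗ λ̄^{k−1}·λ̄i·λ̄j of so(n,1) ⊗ Q satisfy [Q^{2k1}_{ij}, Q^{2k2}_{ab}] = δ_{aj}·Q^{2(k1+k2)}_{ib} − δ_{ib}·Q^{2(k1+k2)}_{aj} + δ_{jb}·Q^{2(k1+k2)}_{ai} − δ_{ia}·Q^{2(k1+k2)}_{jb} + ri·δ_{ib}·Q^{2(k1+k2−1)}_{aj} − rj·δ_{aj}·Q^{2(k1+k2−1)}_{ib} + ri·δ_{ia}·Q^{2(k1+k2−1)}_{jb} − rj·δ_{jb}·Q^{2(k1+k2−1)}_{ai}. -/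
open MvPolynomial Matrix

/-- Kronecker delta valued in . -/
noncomputable def kdelta {n : ℕ} (a b : Fin n) : ℂ := if a = b then 1 else 0

/-!
Writing `Q^{2k}_{ij} = c_k(i,j) • A_{ij}` with `A_{ij} = E_{ij} − E_{ji}` and
`c_k(i,j) = λ̄^{k−1} λ̄ᵢ λ̄ⱼ`, the bracket is `c_{k₁}(i,j) c_{k₂}(a,b) • ⁅A_{ij}, A_{ab}⁆`, and
`⁅A_{ij}, A_{ab}⁆` is the usual `so(n)` formula with four Kronecker-delta terms. In each term
the contracted index `l` occurs squared in the coefficient, and the curve relation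
`λ̄ₗ² = λ̄ − rₗ` splits it into a `Q^{2(k₁+k₂)}` term and an `rₗ • Q^{2(k₁+k₂−1)}` term.
-/

namespace Matrix

variable {ι R : Type*} [DecidableEq ι] [Fintype ι]

lemma lie_smul_smul [CommRing R] (c d : R) (x y : Matrix ι ι R) :
    ⁅c • x, d • y⁆ = (c * d) • ⁅x, y⁆ := by
  rw [Ring.lie_def, Ring.lie_def, smul_mul_smul_comm, smul_mul_smul_comm, mul_comm d, smul_sub]

variable [Ring R]

variable (R) in
def antisymmSingle (i j : ι) : Matrix ι ι R := single i j 1 - single j i 1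

lemma single_one_mul_single_one (i j a b : ι) :
    (single i j 1 : Matrix ι ι R) * single a b 1 = if j = a then single i b 1 else 0 := by
  split_ifs with h
  · rw [h, single_mul_single_same, one_mul]
  · exact single_mul_single_of_ne (h := h) ..

lemma lie_antisymmSingle (i j a b : ι) :
    ⁅antisymmSingle R i j, antisymmSingle R a b⁆ =
      (if j = a then antisymmSingle R i b else 0) - (if i = b then antisymmSingle R a j else 0)
        + (if j = b then antisymmSingle R a i else 0)
        - (if i = a then antisymmSingle R j b else 0) := by
  simp only [antisymmSingle, Ring.lie_def, sub_mul, mul_sub, single_one_mul_single_one]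
  split_ifs <;> subst_vars <;> first | contradiction | abel

end Matrix

section Kronecker

variable {n : ℕ}

lemma kdelta_comm (a b : Fin n) : kdelta a b = kdelta b a := by
  simp only [kdelta, eq_comm]

lemma ite_eq_kdelta_smul {M : Type*} [AddCommMonoid M] [Module ℂ M] (a b : Fin n) (m : M) :
    (if a = b then m else 0) = kdelta a b • m := by
  split_ifs with h <;> simp [kdelta, h]

end Kronecker

section EvenGenerators

variable {n : ℕ} [NeZero n] {r : Fin n → ℂ}

lemma lamQ_sq (i : Fin n) : lamQ n r i ^ 2 = lambar n r - algebraMap ℂ (LLQ n r) (r i) := by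
  have h : Ideal.Quotient.mk (LLIdeal n r) (X i ^ 2 + C (r i))
      = Ideal.Quotient.mk (LLIdeal n r) (X 0 ^ 2 + C (r 0)) :=
    Ideal.Quotient.eq.mpr (Ideal.subset_span ⟨i, 0, by ring⟩)
  rw [eq_sub_iff_add_eq]
  exact h

variable (n r) in
noncomputable def evenCoeff (k : ℕ) (i j : Fin n) : LLQ n r :=
  lambar n r ^ (k - 1) * lamQ n r i * lamQ n r j

lemma Qeven_eq_evenCoeff_smul (k : ℕ) (i j : Fin n) :
    Qeven n r k i j = evenCoeff n r k i j • antisymmSingle (LLQ n r) i.castSucc j.castSucc := rfl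

lemma evenCoeff_mul_evenCoeff {k₁ k₂ : ℕ} (hk₁ : 1 ≤ k₁) (hk₂ : 1 ≤ k₂) (x l y : Fin n) :
    evenCoeff n r k₁ x l * evenCoeff n r k₂ l y
      = evenCoeff n r (k₁ + k₂) x y - algebraMap ℂ _ (r l) * evenCoeff n r (k₁ + k₂ - 1) x y := by
  obtain ⟨p, rfl⟩ := Nat.exists_eq_add_of_le' hk₁
  obtain ⟨q, rfl⟩ := Nat.exists_eq_add_of_le' hk₂
  simp only [evenCoeff, show p + 1 + (q + 1) - 1 = p + q + 1 by omega, Nat.add_sub_cancel]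
  linear_combination (lambar n r ^ (p + q) * lamQ n r x * lamQ n r y) * lamQ_sq (r := r) l

lemma kdelta_smul_evenCoeff_mul_smul {k₁ k₂ : ℕ} (hk₁ : 1 ≤ k₁) (hk₂ : 1 ≤ k₂)
    (x l l' y : Fin n) :
    kdelta l l' • ((evenCoeff n r k₁ x l * evenCoeff n r k₂ l' y)
        • antisymmSingle (LLQ n r) x.castSucc y.castSucc)
      = kdelta l l' • Qeven n r (k₁ + k₂) x y
        - (r l * kdelta l l') • Qeven n r (k₁ + k₂ - 1) x y := by
  rcases eq_or_ne l l' with rfl | h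
  · simp only [kdelta, if_true, one_smul, mul_one, evenCoeff_mul_evenCoeff hk₁ hk₂, sub_smul,
      Qeven_eq_evenCoeff_smul, mul_smul, algebraMap_smul]
  · simp [kdelta, h]

/-- The product `c_{k₁}(i,j) c_{k₂}(a,b)` depends only on the multiset `{i, j, a, b}`; each term
is written with its contracted pair of indices in the middle. -/
lemma lie_Qeven_Qeven (k₁ k₂ : ℕ) (i j a b : Fin n) :
    ⁅Qeven n r k₁ i j, Qeven n r k₂ a b⁆
      = kdelta j a • ((evenCoeff n r k₁ i j * evenCoeff n r k₂ a b)
            • antisymmSingle (LLQ n r) i.castSucc b.castSucc)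
        - kdelta i b • ((evenCoeff n r k₁ a i * evenCoeff n r k₂ b j)
            • antisymmSingle (LLQ n r) a.castSucc j.castSucc)
        + kdelta j b • ((evenCoeff n r k₁ a j * evenCoeff n r k₂ b i)
            • antisymmSingle (LLQ n r) a.castSucc i.castSucc)
        - kdelta i a • ((evenCoeff n r k₁ j i * evenCoeff n r k₂ a b)
            • antisymmSingle (LLQ n r) j.castSucc b.castSucc) := by
  have h_ib : evenCoeff n r k₁ a i * evenCoeff n r k₂ b j
      = evenCoeff n r k₁ i j * evenCoeff n r k₂ a b := by simp only [evenCoeff]; ring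
  have h_jb : evenCoeff n r k₁ a j * evenCoeff n r k₂ b i
      = evenCoeff n r k₁ i j * evenCoeff n r k₂ a b := by simp only [evenCoeff]; ring
  have h_ia : evenCoeff n r k₁ j i * evenCoeff n r k₂ a b
      = evenCoeff n r k₁ i j * evenCoeff n r k₂ a b := by simp only [evenCoeff]; ring
  rw [h_ib, h_jb, h_ia, Qeven_eq_evenCoeff_smul, Qeven_eq_evenCoeff_smul, lie_smul_smul,
    lie_antisymmSingle]
  simp only [Fin.castSucc_inj, ite_eq_kdelta_smul, smul_sub, smul_add, smul_comm _ (kdelta _ _)]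

end EvenGenerators

theorem stmt_4_general (n : ℕ) [NeZero n] (r : Fin n → ℂ) :
    ∀ (i j a b : Fin n) (k₁ k₂ : ℕ), i ≠ j → a ≠ b → 1 ≤ k₁ → 1 ≤ k₂ →
      ⁅Qeven n r k₁ i j, Qeven n r k₂ a b⁆
        = kdelta a j • Qeven n r (k₁ + k₂) i b
          - kdelta i b • Qeven n r (k₁ + k₂) a j
          + kdelta j b • Qeven n r (k₁ + k₂) a i
          - kdelta i a • Qeven n r (k₁ + k₂) j b
          + (r i * kdelta i b) • Qeven n r (k₁ + k₂ - 1) a j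
          - (r j * kdelta a j) • Qeven n r (k₁ + k₂ - 1) i b
          + (r i * kdelta i a) • Qeven n r (k₁ + k₂ - 1) j b
          - (r j * kdelta j b) • Qeven n r (k₁ + k₂ - 1) a i := by
  intro i j a b k₁ k₂ _ _ hk₁ hk₂
  rw [lie_Qeven_Qeven]
  simp only [kdelta_smul_evenCoeff_mul_smul hk₁ hk₂]
  rw [kdelta_comm j a]
  abel

theorem stmt_4 (n : ℕ) [NeZero n] (hn : 3 ≤ n) (r : Fin n → ℂ) (hr : Function.Injective r) :
    ∀ (i j a b : Fin n) (k₁ k₂ : ℕ), i ≠ j → a ≠ b → 1 ≤ k₁ → 1 ≤ k₂ →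
      ⁅Qeven n r k₁ i j, Qeven n r k₂ a b⁆
        = kdelta a j • Qeven n r (k₁ + k₂) i b
          - kdelta i b • Qeven n r (k₁ + k₂) a j
          + kdelta j b • Qeven n r (k₁ + k₂) a i
          - kdelta i a • Qeven n r (k₁ + k₂) j b
          + (r i * kdelta i b) • Qeven n r (k₁ + k₂ - 1) a j
          - (r j * kdelta a j) • Qeven n r (k₁ + k₂ - 1) i b
          + (r i * kdelta i a) • Qeven n r (k₁ + k₂ - 1) j b
          - (r j * kdelta j b) • Qeven n r (k₁ + k₂ - 1) a i :=
  stmt_4_general n r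
end

section
/- For i ≠ j, any a (a = i, a = j or a different from both), and k1, k2 ≥ 1, the elements Q^{2k}_{ij} = (E_{i,j} − E_{j,i}) ⊗ λ̄^{k−1}λ̄iλ̄j and Q^{2k−1}_a = (E_{a,n+1} + E_{n+1,a}) ⊗ λ̄^{k−1}λ̄a of so(n,1) ⊗ Q satisfy [Q^{2k1}_{ij}, Q^{2k2−1}_a] = δ_{aj}·Q^{2k1+2k2−1}_i − δ_{ia}·Q^{2k1+2k2−1}_j − rj·δ_{aj}·Q^{2k1+2k2−3}_i + ri·δ_{ia}·Q^{2k1+2k2−3}_j. -/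
open MvPolynomial Matrix
set_option synthInstance.maxHeartbeats 1000000
set_option maxHeartbeats 1000000

section Helpers
open Matrix
variable {N R : Type*} [DecidableEq N] [Fintype N] [CommRing R]

lemma LLcaseAJ (i j L : N) (hij : i ≠ j) (hiL : i ≠ L) (hjL : j ≠ L) :
    (Matrix.single i j (1:R) - Matrix.single j i 1) * (Matrix.single j L 1 + Matrix.single L j 1)
      - (Matrix.single j L 1 + Matrix.single L j 1) * (Matrix.single i j 1 - Matrix.single j i 1)
    = Matrix.single i L 1 + Matrix.single L i 1 := by
  have h1 := hij.symm; have h2 := hiL.symm; have h3 := hjL.symm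
  simp [Matrix.sub_mul, Matrix.mul_sub, Matrix.mul_add, Matrix.add_mul,
    Matrix.single_mul_single_same, Matrix.single_mul_single_of_ne, hij, hiL, hjL, h1, h2, h3]

lemma LLcaseAI (i j L : N) (hij : i ≠ j) (hiL : i ≠ L) (hjL : j ≠ L) :
    (Matrix.single i j (1:R) - Matrix.single j i 1) * (Matrix.single i L 1 + Matrix.single L i 1)
      - (Matrix.single i L 1 + Matrix.single L i 1) * (Matrix.single i j 1 - Matrix.single j i 1)
    = -(Matrix.single j L 1 + Matrix.single L j 1) := by
  have h1 := hij.symm; have h2 := hiL.symm; have h3 := hjL.symm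
  simp [Matrix.sub_mul, Matrix.mul_sub, Matrix.mul_add, Matrix.add_mul,
    Matrix.single_mul_single_same, Matrix.single_mul_single_of_ne, hij, hiL, hjL, h1, h2, h3]
  abel

lemma LLcaseNone (i j a L : N) (hij : i ≠ j) (haL : a ≠ L) (hai : a ≠ i) (haj : a ≠ j)
    (hiL : i ≠ L) (hjL : j ≠ L) :
    (Matrix.single i j (1:R) - Matrix.single j i 1) * (Matrix.single a L 1 + Matrix.single L a 1)
      - (Matrix.single a L 1 + Matrix.single L a 1) * (Matrix.single i j 1 - Matrix.single j i 1)
    = 0 := by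
  have h1 := haL.symm; have h2 := hai.symm; have h3 := haj.symm
  have h4 := hiL.symm; have h5 := hjL.symm
  simp [Matrix.sub_mul, Matrix.mul_sub, Matrix.mul_add, Matrix.add_mul,
    Matrix.single_mul_single_of_ne, haL, hai, haj, h1, h2, h3, hiL, hjL, h4, h5]

lemma LLsmulsub (q₁ q₂ : R) (A B : Matrix N N R) :
    (q₁ • A) * (q₂ • B) - (q₂ • B) * (q₁ • A) = (q₁ * q₂) • (A * B - B * A) := by
  rw [Matrix.smul_mul, Matrix.mul_smul, smul_smul, Matrix.smul_mul, Matrix.mul_smul,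
    smul_smul, mul_comm q₂ q₁, smul_sub]
end Helpers

lemma LLlamQ_sq (n : ℕ) (r : Fin n → ℂ) [NeZero n] (j : Fin n) :
    lamQ n r j ^ 2 = lambar n r - algebraMap ℂ _ (r j) := by
  have halg : ∀ x : ℂ, algebraMap ℂ (LLQ n r) x = Ideal.Quotient.mk _ (C x) := fun x => rfl
  rw [lambar, lamQ, lamQ, halg, halg, eq_sub_iff_add_eq, ← map_pow, ← map_pow, ← map_add,
    ← map_add, Ideal.Quotient.eq]
  exact Ideal.subset_span ⟨j, 0, by ring⟩

lemma LLkey (n : ℕ) (r : Fin n → ℂ) [NeZero n] (k₁ k₂ : ℕ) (hk₁ : 1 ≤ k₁) (hk₂ : 1 ≤ k₂)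
    (i j : Fin n) :
    lambar n r ^ (k₁-1) * lamQ n r i * lamQ n r j * (lambar n r ^ (k₂-1) * lamQ n r j)
      = lambar n r ^ (k₁+k₂-1) * lamQ n r i
        - algebraMap ℂ _ (r j) * (lambar n r ^ (k₁+k₂-1-1) * lamQ n r i) := by
  have e1 : k₁ + k₂ - 1 = (k₁-1) + (k₂-1) + 1 := by omega
  have e2 : k₁ + k₂ - 1 - 1 = (k₁-1) + (k₂-1) := by omega
  have h := LLlamQ_sq n r j
  rw [e2, e1, pow_succ, pow_add]
  nth_rewrite 1 [show lambar n r ^ (k₁-1) * lamQ n r i * lamQ n r j *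
    (lambar n r ^ (k₂-1) * lamQ n r j)
    = lambar n r ^ (k₁-1) * lambar n r ^ (k₂-1) * lamQ n r i * (lamQ n r j)^2 by ring]
  rw [h]; ring

lemma LLfinal1 {n : ℕ} {r : Fin n → ℂ} (s₁ s₂ : LLQ n r) (c : ℂ) (M : LLM n r) :
    (s₁ - algebraMap ℂ (LLQ n r) c * s₂) • M = s₁ • M - c • s₂ • M := by
  rw [sub_smul, mul_smul, algebraMap_smul]

lemma LLsmulneg {n : ℕ} {r : Fin n → ℂ} (q : LLQ n r) (M : LLM n r) :
    q • -M = -(q • M) := by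
  ext x y
  simp only [Matrix.smul_apply, Matrix.neg_apply, smul_eq_mul]
  exact mul_neg q (M x y)

lemma LLfinal2 {n : ℕ} {r : Fin n → ℂ} (s₁ s₂ : LLQ n r) (c : ℂ) (M : LLM n r) :
    (s₁ - algebraMap ℂ (LLQ n r) c * s₂) • -M = -(s₁ • M) + c • s₂ • M := by
  rw [LLsmulneg, LLfinal1, neg_sub]
  abel

lemma LLsmulzero {n : ℕ} {r : Fin n → ℂ} (q : LLQ n r) : q • (0 : LLM n r) = 0 :=
  smul_zero q

theorem stmt_5 (n : ℕ) [NeZero n] (hn : 3 ≤ n) (r : Fin n → ℂ) (hr : Function.Injective r) :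
    ∀ (i j a : Fin n) (k₁ k₂ : ℕ), i ≠ j → 1 ≤ k₁ → 1 ≤ k₂ →
      ⁅Qeven n r k₁ i j, Qodd n r k₂ a⁆
        = kdelta a j • Qodd n r (k₁ + k₂) i
          - kdelta i a • Qodd n r (k₁ + k₂) j
          - (r j * kdelta a j) • Qodd n r (k₁ + k₂ - 1) i
          + (r i * kdelta i a) • Qodd n r (k₁ + k₂ - 1) j := by
  intro i j a k₁ k₂ hij hk₁ hk₂
  have hlast : ∀ l : Fin n, (l.castSucc : Fin (n+1)) ≠ Fin.last n :=
    fun l => (Fin.castSucc_lt_last l).ne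
  have hcs : ∀ x y : Fin n, x ≠ y → (x.castSucc : Fin (n+1)) ≠ y.castSucc :=
    fun x y h hh => h (Fin.castSucc_injective n hh)
  rw [Ring.lie_def, Qeven, Qodd, LLsmulsub]
  rcases eq_or_ne a j with rfl | haj
  · have hia : i ≠ a := hij
    rw [LLcaseAJ _ _ _ (hcs _ _ hij) (hlast i) (hlast a),
      LLkey n r k₁ k₂ hk₁ hk₂ i a]
    simp only [kdelta, if_neg hia, eq_self_iff_true, if_true, mul_one, mul_zero, one_smul,
      zero_smul, sub_zero, add_zero, Qodd]
    rw [LLfinal1]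
  · rcases eq_or_ne i a with rfl | hia
    · rw [LLcaseAI _ _ _ (hcs _ _ hij) (hlast i) (hlast j),
        show lambar n r ^ (k₁-1) * lamQ n r i * lamQ n r j * (lambar n r ^ (k₂-1) * lamQ n r i)
          = lambar n r ^ (k₁-1) * lamQ n r j * lamQ n r i * (lambar n r ^ (k₂-1) * lamQ n r i)
          from by ring,
        LLkey n r k₁ k₂ hk₁ hk₂ j i]
      simp only [kdelta, if_neg haj, eq_self_iff_true, if_true, mul_one, mul_zero, one_smul,
        zero_smul, zero_sub, sub_zero, Qodd]
      rw [LLfinal2]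
    · rw [LLcaseNone _ _ _ _ (hcs _ _ hij) (hlast a) (hcs _ _ (Ne.symm hia)) (hcs _ _ haj)
        (hlast i) (hlast j)]
      rw [LLsmulzero]
      simp only [kdelta, if_neg haj, if_neg hia, mul_zero, zero_smul, sub_zero, add_zero]
end

section
/- In the Lie algebra g(n), for any pairwise distinct indices i, j, l one has [p_l,[p_l,[p_i,[p_i,p_j]]]] ≡ [p_i,[p_i,[p_i,[p_i,p_j]]]] modulo the filtration subspace g^4, i.e. the difference lies in g^4 (where g^m is the canonical filtration generated by p_1,...,p_n). -/
noncomputable section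

def gRel (n : ℕ) (r : Fin n → ℂ) : Set (FreeLieAlgebra ℂ (Fin n)) :=
  {x | ∃ i j k : Fin n, i ≠ k ∧ j ≠ k ∧
        x = ⁅FreeLieAlgebra.of ℂ i, ⁅FreeLieAlgebra.of ℂ i, FreeLieAlgebra.of ℂ k⁆⁆
            - ⁅FreeLieAlgebra.of ℂ j, ⁅FreeLieAlgebra.of ℂ j, FreeLieAlgebra.of ℂ k⁆⁆
            - (r j - r i) • FreeLieAlgebra.of ℂ k} ∪
  {x | ∃ i j k : Fin n, i ≠ j ∧ i ≠ k ∧ j ≠ k ∧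
        x = ⁅FreeLieAlgebra.of ℂ i, ⁅FreeLieAlgebra.of ℂ j, FreeLieAlgebra.of ℂ k⁆⁆}

def gIdeal (n : ℕ) (r : Fin n → ℂ) : LieIdeal ℂ (FreeLieAlgebra ℂ (Fin n)) :=
  LieSubmodule.lieSpan ℂ (FreeLieAlgebra ℂ (Fin n)) (gRel n r)

abbrev gLL (n : ℕ) (r : Fin n → ℂ) : Type := FreeLieAlgebra ℂ (Fin n) ⧸ gIdeal n r

def pgen (n : ℕ) (r : Fin n → ℂ) (i : Fin n) : gLL n r :=
  LieSubmodule.Quotient.mk (N := gIdeal n r) (FreeLieAlgebra.of ℂ i)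


end

section aux

variable {n : ℕ} {r : Fin n → ℂ}

lemma rel1 (a b k : Fin n) (hak : a ≠ k) (hbk : b ≠ k) :
    ⁅pgen n r a, ⁅pgen n r a, pgen n r k⁆⁆ =
      ⁅pgen n r b, ⁅pgen n r b, pgen n r k⁆⁆ + (r b - r a) • pgen n r k := by
  have hmem : (⁅FreeLieAlgebra.of ℂ a, ⁅FreeLieAlgebra.of ℂ a, FreeLieAlgebra.of ℂ k⁆⁆
      - ⁅FreeLieAlgebra.of ℂ b, ⁅FreeLieAlgebra.of ℂ b, FreeLieAlgebra.of ℂ k⁆⁆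
      - (r b - r a) • FreeLieAlgebra.of ℂ k) ∈ gIdeal n r :=
    LieSubmodule.subset_lieSpan (Or.inl ⟨a, b, k, hak, hbk, rfl⟩)
  have h0 : LieSubmodule.Quotient.mk (N := gIdeal n r)
      (⁅FreeLieAlgebra.of ℂ a, ⁅FreeLieAlgebra.of ℂ a, FreeLieAlgebra.of ℂ k⁆⁆
      - ⁅FreeLieAlgebra.of ℂ b, ⁅FreeLieAlgebra.of ℂ b, FreeLieAlgebra.of ℂ k⁆⁆
      - (r b - r a) • FreeLieAlgebra.of ℂ k) = 0 :=
    (LieSubmodule.Quotient.mk_eq_zero').mpr hmem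
  have h : (⁅pgen n r a, ⁅pgen n r a, pgen n r k⁆⁆
      - ⁅pgen n r b, ⁅pgen n r b, pgen n r k⁆⁆ - (r b - r a) • pgen n r k : gLL n r) = 0 := by
    rw [← h0]
    simp only [pgen, LieSubmodule.Quotient.mk, Submodule.Quotient.mk_sub,
      Submodule.Quotient.mk_smul]
    rfl
  linear_combination (norm := module) h

lemma rel2 (a b k : Fin n) (hab : a ≠ b) (hak : a ≠ k) (hbk : b ≠ k) :
    (⁅pgen n r a, ⁅pgen n r b, pgen n r k⁆⁆ : gLL n r) = 0 := by
  have hmem : (⁅FreeLieAlgebra.of ℂ a, ⁅FreeLieAlgebra.of ℂ b, FreeLieAlgebra.of ℂ k⁆⁆)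
      ∈ gIdeal n r :=
    LieSubmodule.subset_lieSpan (Or.inr ⟨a, b, k, hab, hak, hbk, rfl⟩)
  exact (LieSubmodule.Quotient.mk_eq_zero').mpr hmem

/-- `F` lemma: for pairwise distinct `u, y, j`. -/
lemma lemF (u y j : Fin n) (huy : u ≠ y) (huj : u ≠ j) (hyj : y ≠ j) :
    (⁅pgen n r u, ⁅pgen n r u, ⁅pgen n r y, ⁅pgen n r y, pgen n r j⁆⁆⁆⁆ : gLL n r) =
      ⁅⁅pgen n r j, ⁅pgen n r j, pgen n r y⁆⁆, ⁅pgen n r y, pgen n r j⁆⁆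
      + (r j - r u) • ⁅pgen n r y, ⁅pgen n r y, pgen n r j⁆⁆ := by
  set P := pgen n r with hP
  have h1 : (⁅P u, ⁅P y, ⁅P y, P j⁆⁆⁆ : gLL n r) = ⁅⁅P u, P y⁆, ⁅P y, P j⁆⁆ := by
    rw [leibniz_lie (P u) (P y) ⁅P y, P j⁆, rel2 u y j huy huj hyj, lie_zero, add_zero]
  rw [h1, leibniz_lie (P u) ⁅P u, P y⁆ ⁅P y, P j⁆, rel2 u y j huy huj hyj, lie_zero, add_zero,
    rel1 u j y huy (Ne.symm hyj), add_lie, smul_lie]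

/-- `E` lemma: for pairwise distinct `x, y, j`. -/
lemma lemE (x y j : Fin n) (hxy : x ≠ y) (hxj : x ≠ j) (hyj : y ≠ j) :
    (⁅pgen n r x, ⁅pgen n r x, ⁅pgen n r x, ⁅pgen n r x, pgen n r j⁆⁆⁆⁆ : gLL n r) =
      ⁅⁅pgen n r j, ⁅pgen n r j, pgen n r y⁆⁆, ⁅pgen n r y, pgen n r j⁆⁆
      + (r j - r x) • ⁅pgen n r y, ⁅pgen n r y, pgen n r j⁆⁆
      + (r y - r x) • ⁅pgen n r x, ⁅pgen n r x, pgen n r j⁆⁆ := by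
  set P := pgen n r with hP
  conv_lhs => rw [show (⁅P x, ⁅P x, P j⁆⁆ : gLL n r)
      = ⁅P y, ⁅P y, P j⁆⁆ + (r y - r x) • P j from rel1 x y j hxj hyj]
  rw [lie_add, lie_add, lie_smul, lie_smul, lemF x y j hxy hxj hyj, add_assoc]

end aux

theorem stmt_13 (n : ℕ) (hn : 4 ≤ n) (r : Fin n → ℂ) (hr : Function.Injective r)
    (gfil : ℕ → Submodule ℂ (gLL n r))
    (h0 : gfil 0 = ⊥)
    (h1 : gfil 1 = Submodule.span ℂ (Set.range (pgen n r)))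
    (hm : ∀ m : ℕ, 2 ≤ m → gfil m =
      gfil 1 ⊔ Submodule.span ℂ
        {z | ∃ (a b : ℕ) (x y : gLL n r),
              a + b ≤ m ∧ x ∈ gfil a ∧ y ∈ gfil b ∧ z = ⁅x, y⁆}) :
    ∀ i j l : Fin n, i ≠ j → i ≠ l → j ≠ l →
      ⁅pgen n r l, ⁅pgen n r l, ⁅pgen n r i, ⁅pgen n r i, pgen n r j⁆⁆⁆⁆
        - ⁅pgen n r i, ⁅pgen n r i, ⁅pgen n r i, ⁅pgen n r i, pgen n r j⁆⁆⁆⁆ ∈ gfil 4 := by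
  intro i j l hij hil hjl
  set P := pgen n r with hP
  -- generators lie in `gfil 1`
  have hgen : ∀ x : Fin n, P x ∈ gfil 1 := by
    intro x
    rw [h1]
    exact Submodule.subset_span ⟨x, rfl⟩
  -- double brackets of generators lie in `gfil 2`
  have h2 : ∀ x y : Fin n, (⁅P x, P y⁆ : gLL n r) ∈ gfil 2 := by
    intro x y
    rw [hm 2 le_rfl]
    exact Submodule.mem_sup_right
      (Submodule.subset_span ⟨1, 1, P x, P y, le_rfl, hgen x, hgen y, rfl⟩)
  -- triple brackets of generators lie in `gfil 4`
  have hC : ∀ x y z : Fin n, (⁅P x, ⁅P y, P z⁆⁆ : gLL n r) ∈ gfil 4 := by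
    intro x y z
    rw [hm 4 (by norm_num)]
    exact Submodule.mem_sup_right
      (Submodule.subset_span ⟨1, 2, P x, ⁅P y, P z⁆, by norm_num, hgen x, h2 y z, rfl⟩)
  -- pick a fourth index m distinct from i, j, l
  obtain ⟨m, hmi, hmj, hml⟩ : ∃ m : Fin n, m ≠ i ∧ m ≠ j ∧ m ≠ l := by
    by_contra hcon
    push_neg at hcon
    have hsub : (Finset.univ : Finset (Fin n)) ⊆ {i, j, l} := by
      intro x _
      simp only [Finset.mem_insert, Finset.mem_singleton]
      by_cases hxi : x = i
      · exact Or.inl hxi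
      by_cases hxj : x = j
      · exact Or.inr (Or.inl hxj)
      exact Or.inr (Or.inr (hcon x hxi hxj))
    have hcard := Finset.card_le_card hsub
    have h3 : ({i, j, l} : Finset (Fin n)).card ≤ 3 := by
      apply le_trans (Finset.card_insert_le _ _)
      have := Finset.card_insert_le j ({l} : Finset (Fin n))
      simp at this ⊢
      omega
    simp [Finset.card_univ] at hcard
    omega
  have hT1 := lemF (r := r) l i j (Ne.symm hil) (Ne.symm hjl) hij
  have hEi := lemE (r := r) i l j hil hij (Ne.symm hjl)
  have hEm1 := lemE (r := r) m i j hmi hmj hij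
  have hEm2 := lemE (r := r) m l j hml hmj (Ne.symm hjl)
  have key : ⁅P l, ⁅P l, ⁅P i, ⁅P i, P j⁆⁆⁆⁆ - ⁅P i, ⁅P i, ⁅P i, ⁅P i, P j⁆⁆⁆⁆
      = (r m + r i - 2 * r l) • ⁅P i, ⁅P i, P j⁆⁆ + (r i - r m) • ⁅P l, ⁅P l, P j⁆⁆
        + (r l - r i) • ⁅P m, ⁅P m, P j⁆⁆ := by
    linear_combination (norm := module) hT1 - hEi - hEm1 + hEm2
  rw [key]
  exact Submodule.add_mem _
    (Submodule.add_mem _ (Submodule.smul_mem _ _ (hC i i j)) (Submodule.smul_mem _ _ (hC l l j)))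
    (Submodule.smul_mem _ _ (hC m m j))
end

section
/- In the free Lie algebra on generators p_1,...,p_n modulo the relation [p_i,[p_j,p_k]] = 0 for all pairwise distinct i, j, k, the relations [p_i,[p_i,p_k]] − [p_j,[p_j,p_k]] = (rj − ri)p_k (for i ≠ k, j ≠ k, i ≠ j) imply [p_i,[p_j,[p_j,p_i]]] = [p_i,[p_k,[p_k,p_i]]] whenever i, j, k are pairwise distinct. -/
theorem stmt_14 (n : ℕ) (hn : 3 ≤ n) (r : Fin n → ℂ) (hr : Function.Injective r) :
    ∀ i j k : Fin n, i ≠ j → i ≠ k → j ≠ k →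
      ⁅pgen n r i, ⁅pgen n r j, ⁅pgen n r j, pgen n r i⁆⁆⁆
        = ⁅pgen n r i, ⁅pgen n r k, ⁅pgen n r k, pgen n r i⁆⁆⁆ := by
  intro i j k hij hik hjk
  have hmem : (⁅FreeLieAlgebra.of ℂ j, ⁅FreeLieAlgebra.of ℂ j, FreeLieAlgebra.of ℂ i⁆⁆
      - ⁅FreeLieAlgebra.of ℂ k, ⁅FreeLieAlgebra.of ℂ k, FreeLieAlgebra.of ℂ i⁆⁆
      - (r k - r j) • FreeLieAlgebra.of ℂ i) ∈ gIdeal n r := by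
    apply LieSubmodule.subset_lieSpan
    exact Or.inl ⟨j, k, i, hij.symm, hik.symm, rfl⟩
  have h0 : ⁅pgen n r j, ⁅pgen n r j, pgen n r i⁆⁆
      - ⁅pgen n r k, ⁅pgen n r k, pgen n r i⁆⁆
      - (r k - r j) • pgen n r i = 0 := by
    have := (LieSubmodule.Quotient.mk_eq_zero' (N := gIdeal n r)).2 hmem
    simpa [pgen, LieSubmodule.Quotient.mk_bracket, map_sub, map_smul] using this
  have h1 : ⁅pgen n r j, ⁅pgen n r j, pgen n r i⁆⁆
      = ⁅pgen n r k, ⁅pgen n r k, pgen n r i⁆⁆ + (r k - r j) • pgen n r i := by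
    linear_combination (norm := module) h0
  rw [h1, lie_add, lie_smul, lie_self, smul_zero, add_zero]
end

section
/- In g(3) (generators C_1, C_2, C_3 with relations [C_i,[C_j,C_k]] = 0 for {i,j,k} = {1,2,3} and [C_1,[C_1,C_3]] − [C_2,[C_2,C_3]] = (r2−r1)C_3, [C_1,[C_1,C_2]] − [C_3,[C_3,C_2]] = (r3−r1)C_2, [C_2,[C_2,C_1]] − [C_3,[C_3,C_1]] = (r3−r2)C_1), one has [C_3,[C_2,[C_2,C_3]]] = 0. -/
set_option maxRecDepth 8000
set_option maxHeartbeats 1000000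
set_option synthInstance.maxHeartbeats 400000


lemma pgen_rel1 (r : Fin 3 → ℂ) (i j k : Fin 3) (hik : i ≠ k) (hjk : j ≠ k) :
    ⁅pgen 3 r i, ⁅pgen 3 r i, pgen 3 r k⁆⁆ - ⁅pgen 3 r j, ⁅pgen 3 r j, pgen 3 r k⁆⁆
      = (r j - r i) • pgen 3 r k := by
  have hx : (⁅FreeLieAlgebra.of ℂ i, ⁅FreeLieAlgebra.of ℂ i, FreeLieAlgebra.of ℂ k⁆⁆
      - ⁅FreeLieAlgebra.of ℂ j, ⁅FreeLieAlgebra.of ℂ j, FreeLieAlgebra.of ℂ k⁆⁆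
      - (r j - r i) • FreeLieAlgebra.of ℂ k) ∈ gIdeal 3 r :=
    LieSubmodule.subset_lieSpan (Or.inl ⟨i, j, k, hik, hjk, rfl⟩)
  have h0 : LieSubmodule.Quotient.mk (N := gIdeal 3 r)
      (⁅FreeLieAlgebra.of ℂ i, ⁅FreeLieAlgebra.of ℂ i, FreeLieAlgebra.of ℂ k⁆⁆
      - ⁅FreeLieAlgebra.of ℂ j, ⁅FreeLieAlgebra.of ℂ j, FreeLieAlgebra.of ℂ k⁆⁆
      - (r j - r i) • FreeLieAlgebra.of ℂ k) = 0 :=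
    LieSubmodule.Quotient.mk_eq_zero'.mpr hx
  have hsub : ∀ x y : FreeLieAlgebra ℂ (Fin 3),
      LieSubmodule.Quotient.mk (N := gIdeal 3 r) (x - y)
        = LieSubmodule.Quotient.mk (N := gIdeal 3 r) x
          - LieSubmodule.Quotient.mk (N := gIdeal 3 r) y := fun _ _ => rfl
  have hsmul : ∀ (c : ℂ) (x : FreeLieAlgebra ℂ (Fin 3)),
      LieSubmodule.Quotient.mk (N := gIdeal 3 r) (c • x)
        = c • LieSubmodule.Quotient.mk (N := gIdeal 3 r) x := fun _ _ => rfl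
  rw [hsub, hsub, hsmul, LieSubmodule.Quotient.mk_bracket, LieSubmodule.Quotient.mk_bracket,
    LieSubmodule.Quotient.mk_bracket, LieSubmodule.Quotient.mk_bracket] at h0
  have hp : ∀ m : Fin 3, pgen 3 r m
      = LieSubmodule.Quotient.mk (N := gIdeal 3 r) (FreeLieAlgebra.of ℂ m) := fun _ => rfl
  rw [hp, hp, hp]
  exact sub_eq_zero.mp h0

/-- In `g(3)` (here `pgen 3 r 0, pgen 3 r 1, pgen 3 r 2` are the generators
`C₁, C₂, C₃`), one has `[C₃,[C₂,[C₂,C₃]]] = 0`. -/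
theorem stmt_15 (r : Fin 3 → ℂ) (hr : Function.Injective r) :
    ⁅pgen 3 r 2, ⁅pgen 3 r 1, ⁅pgen 3 r 1, pgen 3 r 2⁆⁆⁆ = 0 := by
  set a := pgen 3 r 0 with ha
  set b := pgen 3 r 1 with hb
  set c := pgen 3 r 2 with hc
  have h1 : ⁅a, ⁅a, c⁆⁆ - ⁅b, ⁅b, c⁆⁆ = (r 1 - r 0) • c :=
    pgen_rel1 r 0 1 2 (by decide) (by decide)
  have h2 : ⁅b, ⁅b, a⁆⁆ - ⁅c, ⁅c, a⁆⁆ = (r 2 - r 1) • a :=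
    pgen_rel1 r 1 2 0 (by decide) (by decide)
  have h3 : ⁅c, ⁅c, b⁆⁆ - ⁅a, ⁅a, b⁆⁆ = (r 0 - r 2) • b :=
    pgen_rel1 r 2 0 1 (by decide) (by decide)
  have key : ∀ x y z : gLL 3 r, ∀ s : ℂ, ⁅y, ⁅y, x⁆⁆ - ⁅z, ⁅z, x⁆⁆ = s • x →
      ⁅y, ⁅x, ⁅x, y⁆⁆⁆ = -⁅x, ⁅z, ⁅z, x⁆⁆⁆ := by
    intro x y z s H
    have hyu : ⁅y, ⁅x, y⁆⁆ = -⁅z, ⁅z, x⁆⁆ - s • x := by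
      rw [← lie_skew x y, lie_neg, eq_add_of_sub_eq H, neg_add, sub_eq_add_neg]
      exact add_comm _ _
    rw [leibniz_lie y x ⁅x, y⁆, hyu, ← lie_skew x y, lie_neg, lie_self, neg_zero, zero_add,
      lie_sub, lie_neg, lie_smul, lie_self, smul_zero, sub_zero]
  have e1 : ⁅c, ⁅b, ⁅b, c⁆⁆⁆ = -⁅b, ⁅a, ⁅a, b⁆⁆⁆ := key b c a _ h3
  have e2 : ⁅b, ⁅a, ⁅a, b⁆⁆⁆ = -⁅a, ⁅c, ⁅c, a⁆⁆⁆ := key a b c _ h2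
  have e3 : ⁅a, ⁅c, ⁅c, a⁆⁆⁆ = -⁅c, ⁅b, ⁅b, c⁆⁆⁆ := key c a b _ h1
  have hT : ⁅c, ⁅b, ⁅b, c⁆⁆⁆ = -⁅c, ⁅b, ⁅b, c⁆⁆⁆ :=
    calc ⁅c, ⁅b, ⁅b, c⁆⁆⁆ = -⁅b, ⁅a, ⁅a, b⁆⁆⁆ := e1
      _ = ⁅a, ⁅c, ⁅c, a⁆⁆⁆ := by rw [e2, neg_neg]
      _ = -⁅c, ⁅b, ⁅b, c⁆⁆⁆ := e3
  have h2t : (2 : ℂ) • ⁅c, ⁅b, ⁅b, c⁆⁆⁆ = 0 := by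
    rw [two_smul]
    exact add_eq_zero_iff_eq_neg.mpr hT
  rcases smul_eq_zero.mp h2t with h | h
  · exact absurd h (by norm_num)
  · exact h
end
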